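/- Let F = (F_1, …, F_m) be a Fractran program. Then F halts for every input n ∈ ℕ if and only if the Fractran-type canonical collection 𝒜_F is complete (an additive system for ℤ). -/

import Mathlib

/-- One Fractran iteration: on input `n ≥ 1`, multiply by the first fraction in the
program giving an integer; return `0` if there is no such fraction (the program halts)
or if `n = 0`. -/
def fractranStep (F : List ℚ) (n : ℕ) : ℕ :=
  if n = 0 then 0
  else
    match F.find? (fun q => ((n : ℚ) * q).den == 1) with
    | some q => ((n : ℚ) * q).num.toNat
    | none => 0

/-- The Fractran program `F` halts on input `n`. -/
def FractranHalts (F : List ℚ) (n : ℕ) : Prop :=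
  ∃ k : ℕ, (fractranStep F)^[k] n = 0

/-- The base `b = 1 + ⌈max_k F_k⌉` of the Fractran-type canonical collection `𝒜_F`. -/
def bBase (F : List ℚ) : ℤ := 1 + (F.map fun q => ⌈q⌉).foldr max 0

/-- The bases of `𝒜_F`: `b_i = b^(i+1)`. -/
def bF (F : List ℚ) (i : ℕ) : ℤ := bBase F ^ (i + 1)

/-- The digit maps of `𝒜_F` on `[0, b_i)`: `f_F` except at the exceptional value
`b_i - 1`, which is sent to `1`. -/
def digitF (F : List ℚ) (i : ℕ) (r : ℤ) : ℤ :=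
  if r = bF F i - 1 then 1 else (fractranStep F r.toNat : ℤ)

/-- The residue sets of `𝒜_F`: `T_i = {r - b_i · f_i(r) : 0 ≤ r < b_i}`. -/
def TFr (F : List ℚ) (i : ℕ) : Set ℤ :=
  (fun r => r - bF F i * digitF F i r) '' Set.Ico 0 (bF F i)

/-- The canonical system maps of `𝒜_F`: `f_i(n) = (n - t_i(n)) / b_i`, where
`t_i(n) = r - b_i · f_i(r)` with `r = n mod b_i ∈ [0, b_i)` is the unique element of
`T_i` congruent to `n` modulo `b_i`. -/
def fFr (F : List ℚ) (i : ℕ) (n : ℤ) : ℤ :=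
  (n - Int.emod n (bF F i)) / bF F i + digitF F i (Int.emod n (bF F i))

/-- The trajectory of `n` in the canonical system of `𝒜_F`:
`n_0 = n`, `n_{i+1} = f_i(n_i)`. -/
def trajFr (F : List ℚ) (n : ℤ) : ℕ → ℤ
  | 0 => n
  | i + 1 => fFr F i (trajFr F n i)

/-- `prodBases b i = b 0 * b 1 * ⋯ * b (i-1)`. -/
def prodBases (b : ℕ → ℤ) (i : ℕ) : ℤ := ∏ j ∈ Finset.range i, b j

/-- The member sets `A i = (b 0 ⋯ b (i-1)) • T i` of a canonical collection. -/
def memberSet (b : ℕ → ℤ) (T : ℕ → Set ℤ) (i : ℕ) : Set ℤ :=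
  (fun t => prodBases b i * t) '' T i

/-- `a` is a representation of `n` in the collection `A`. -/
def IsRepr (A : ℕ → Set ℤ) (n : ℤ) (a : ℕ → ℤ) : Prop :=
  (∀ i, a i ∈ A i) ∧ (Function.support a).Finite ∧ n = ∑ᶠ i, a i

/-!
A canonical collection is complete exactly when every trajectory `n, f₀ n, f₁ (f₀ n), …` of its
canonical maps reaches `0`: the digits of any representation are forced level by level, since
each `T i` is a complete residue system, and they telescope to `n` once the trajectory dies.

For `𝒜_F` (where `b ≥ 2`) the trajectory of any `n` drops into `[-1, b_j)` at some level `j`.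
From a value `0 ≤ v < b_j` on, it follows the Fractran orbit of `v`, whose growth
`f_F(m) ≤ (b - 1) m` is outpaced by `b_{i+1} = b · b_i`, except that meeting the exceptional
value `b_i - 1` restarts it at `1`. Such a restart needs `b_i - 1` on the orbit of `1`, so it
happens at finitely many levels only; hence if `F` always halts, every trajectory dies.
Conversely, the trajectory of `b_0 ⋯ b_{k-1} · n` reaches `n` at level `k`, and for
`b_k > n + 1` it never meets an exceptional value, so it follows the Fractran orbit of `n`
forever.
-/

section CanonicalSystem

/-- `sub_mul_mem` says that `f i m = (m - t) / b i` for some digit `t ∈ T i`, which is then the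
element of `T i` congruent to `m`. -/
structure IsCanonicalSystem (b : ℕ → ℤ) (T : ℕ → Set ℤ) (f : ℕ → ℤ → ℤ) : Prop where
  ne_zero : ∀ i, b i ≠ 0
  zero_mem : ∀ i, (0 : ℤ) ∈ T i
  eq_of_dvd_sub : ∀ i, ∀ t ∈ T i, ∀ t' ∈ T i, b i ∣ t - t' → t = t'
  sub_mul_mem : ∀ i m, m - b i * f i m ∈ T i

variable {b : ℕ → ℤ} {T : ℕ → Set ℤ} {f : ℕ → ℤ → ℤ} {x : ℕ → ℤ}

theorem prodBases_succ (b : ℕ → ℤ) (k : ℕ) : prodBases b (k + 1) = prodBases b k * b k :=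
  Finset.prod_range_succ _ _

theorem prodBases_ne_zero (hb : ∀ i, b i ≠ 0) (k : ℕ) : prodBases b k ≠ 0 :=
  Finset.prod_ne_zero_iff.2 fun i _ => hb i

theorem prodBases_dvd_prodBases (b : ℕ → ℤ) {k i : ℕ} (h : k ≤ i) :
    prodBases b k ∣ prodBases b i :=
  Finset.prod_dvd_prod_of_subset _ _ _ (Finset.range_subset_range.2 h)

theorem sum_range_prodBases_mul_sub (b : ℕ → ℤ) (x : ℕ → ℤ) (K : ℕ) :
    ∑ i ∈ Finset.range K, prodBases b i * (x i - b i * x (i + 1))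
      = x 0 - prodBases b K * x K := by
  calc ∑ i ∈ Finset.range K, prodBases b i * (x i - b i * x (i + 1))
      = ∑ i ∈ Finset.range K, (prodBases b i * x i - prodBases b (i + 1) * x (i + 1)) :=
        Finset.sum_congr rfl fun i _ => by rw [prodBases_succ]; ring
    _ = x 0 - prodBases b K * x K := by rw [Finset.sum_range_sub']; simp [prodBases]

theorem IsRepr.exists_forall_eq_sum_range {A : ℕ → Set ℤ} {n : ℤ} {a : ℕ → ℤ}
    (h : IsRepr A n a) : ∃ N, ∀ M, N ≤ M → n = ∑ i ∈ Finset.range M, a i := by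
  obtain ⟨N, hN⟩ := h.2.1.toFinset.exists_nat_subset_range
  refine ⟨N, fun M hM => h.2.2.trans (finsum_eq_sum_of_support_subset _ fun i hi => ?_)⟩
  have := hN (h.2.1.mem_toFinset.2 hi)
  simp only [Finset.mem_range, Finset.coe_range, Set.mem_Iio] at this ⊢
  omega

theorem IsRepr.prodBases_dvd_sub_sum {n : ℤ} {a : ℕ → ℤ}
    (h : IsRepr (memberSet b T) n a) (k : ℕ) :
    prodBases b k ∣ n - ∑ i ∈ Finset.range k, a i := by
  obtain ⟨N, hN⟩ := h.exists_forall_eq_sum_range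
  rw [hN (max N k) (le_max_left _ _), ← Finset.sum_range_add_sum_Ico _ (le_max_right N k),
    add_sub_cancel_left]
  refine Finset.dvd_sum fun i hi => ?_
  obtain ⟨t, -, hat⟩ := h.1 i
  rw [← hat]
  exact (prodBases_dvd_prodBases b (Finset.mem_Ico.1 hi).1).mul_right t

namespace IsCanonicalSystem

theorem map_zero (hS : IsCanonicalSystem b T f) (i : ℕ) : f i 0 = 0 := by
  have h := hS.eq_of_dvd_sub i _ (hS.sub_mul_mem i 0) 0 (hS.zero_mem i) ⟨-f i 0, by ring⟩
  simpa [hS.ne_zero i] using h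

theorem eq_zero_of_le (hS : IsCanonicalSystem b T f) (hx : ∀ i, x (i + 1) = f i (x i))
    {K i : ℕ} (hK : x K = 0) (hi : K ≤ i) : x i = 0 := by
  induction i, hi using Nat.le_induction with
  | base => exact hK
  | succ i _ ih => rw [hx, ih, hS.map_zero]

theorem isRepr_of_eq_zero (hS : IsCanonicalSystem b T f) (hx : ∀ i, x (i + 1) = f i (x i))
    {K : ℕ} (hK : x K = 0) :
    IsRepr (memberSet b T) (x 0) fun i => prodBases b i * (x i - b i * x (i + 1)) := by
  have hsupp : Function.support (fun i => prodBases b i * (x i - b i * x (i + 1)))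
      ⊆ Finset.range K := fun i hi => by
    by_contra hiK
    simp only [Finset.coe_range, Set.mem_Iio, not_lt] at hiK
    simp [hS.eq_zero_of_le hx hK hiK, hS.eq_zero_of_le hx hK (hiK.trans i.le_succ)] at hi
  refine ⟨fun i => ⟨_, by rw [hx]; exact hS.sub_mul_mem i (x i), rfl⟩,
    (Finset.range K).finite_toSet.subset hsupp, ?_⟩
  rw [finsum_eq_sum_of_support_subset _ hsupp, sum_range_prodBases_mul_sub, hK, mul_zero,
    sub_zero]

theorem _root_.IsRepr.sub_sum_eq (hS : IsCanonicalSystem b T f)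
    (hx : ∀ i, x (i + 1) = f i (x i)) {a : ℕ → ℤ} (h : IsRepr (memberSet b T) (x 0) a)
    (k : ℕ) : x 0 - ∑ i ∈ Finset.range k, a i = prodBases b k * x k := by
  induction k with
  | zero => simp [prodBases]
  | succ k ih =>
    obtain ⟨t, ht, hat⟩ := h.1 k
    beta_reduce at hat
    have hrest : prodBases b k * b k ∣ prodBases b k * (x k - t) := by
      have := h.prodBases_dvd_sub_sum (k + 1)
      rwa [Finset.sum_range_succ, ← hat, ← sub_sub, ih, ← mul_sub, prodBases_succ] at this
    have hdvd : b k ∣ x k - t := (mul_dvd_mul_iff_left (prodBases_ne_zero hS.ne_zero k)).1 hrest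
    have hdigit : x k - b k * x (k + 1) = t := by
      refine hS.eq_of_dvd_sub k _ (by rw [hx]; exact hS.sub_mul_mem k _) t ht ?_
      rw [show x k - b k * x (k + 1) - t = x k - t - b k * x (k + 1) by ring]
      exact dvd_sub hdvd (dvd_mul_right _ _)
    rw [Finset.sum_range_succ, ← hat, ← hdigit, prodBases_succ]
    linear_combination ih

theorem _root_.IsRepr.eq_canonical (hS : IsCanonicalSystem b T f)
    (hx : ∀ i, x (i + 1) = f i (x i)) {a : ℕ → ℤ} (h : IsRepr (memberSet b T) (x 0) a) :
    a = fun i => prodBases b i * (x i - b i * x (i + 1)) := by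
  funext k
  have h₁ := h.sub_sum_eq hS hx k
  have h₂ := h.sub_sum_eq hS hx (k + 1)
  rw [Finset.sum_range_succ, prodBases_succ] at h₂
  linear_combination h₁ - h₂

theorem exists_isRepr_iff (hS : IsCanonicalSystem b T f) (hx : ∀ i, x (i + 1) = f i (x i)) :
    (∃ a, IsRepr (memberSet b T) (x 0) a) ↔ ∃ K, x K = 0 := by
  refine ⟨fun ⟨a, h⟩ => ?_, fun ⟨K, hK⟩ => ⟨_, hS.isRepr_of_eq_zero hx hK⟩⟩
  obtain ⟨N, hN⟩ := h.exists_forall_eq_sum_range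
  refine ⟨N, (mul_eq_zero.1 ?_).resolve_left (prodBases_ne_zero hS.ne_zero N)⟩
  rw [← h.sub_sum_eq hS hx N, ← hN N le_rfl, sub_self]

theorem complete_iff (hS : IsCanonicalSystem b T f) (traj : ℤ → ℕ → ℤ)
    (h₀ : ∀ n, traj n 0 = n) (hsucc : ∀ n i, traj n (i + 1) = f i (traj n i)) :
    (∀ n, ∃! a, IsRepr (memberSet b T) n a) ↔ ∀ n, ∃ K, traj n K = 0 := by
  refine forall_congr' fun n => ?_
  rw [← hS.exists_isRepr_iff (hsucc n), h₀]
  refine ⟨ExistsUnique.exists, fun ⟨a, h⟩ => ⟨a, h, fun a' h' => ?_⟩⟩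
  rw [← h₀ n] at h h'
  rw [h.eq_canonical hS (hsucc n), h'.eq_canonical hS (hsucc n)]

end IsCanonicalSystem

end CanonicalSystem

section Fractran

variable {F : List ℚ}

theorem ceil_le_foldr_max {l : List ℚ} {q : ℚ} (hq : q ∈ l) :
    ⌈q⌉ ≤ (l.map fun q => ⌈q⌉).foldr max 0 := by
  induction l with
  | nil => simp at hq
  | cons p l ih =>
    rcases List.mem_cons.1 hq with rfl | h
    · exact le_max_left _ _
    · exact (ih h).trans (le_max_right _ _)

theorem one_le_bBase (F : List ℚ) : 1 ≤ bBase F := by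
  have (l : List ℤ) : 0 ≤ l.foldr max 0 := by induction l <;> simp_all
  exact le_add_of_nonneg_right (this _)

theorem two_le_bBase (hne : F ≠ []) (hpos : ∀ q ∈ F, 0 < q) : 2 ≤ bBase F := by
  obtain ⟨q, l, rfl⟩ := List.exists_cons_of_ne_nil hne
  have hq : 1 ≤ ⌈q⌉ := Int.one_le_ceil_iff.2 (hpos q List.mem_cons_self)
  have := ceil_le_foldr_max (List.mem_cons_self (a := q) (l := l))
  unfold bBase
  omega

theorem fractranStep_eq_zero_or_exists (F : List ℚ) (m : ℕ) :
    fractranStep F m = 0 ∨ ∃ q ∈ F, (fractranStep F m : ℚ) = m * q := by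
  unfold fractranStep
  split_ifs
  · exact Or.inl rfl
  rcases hfind : F.find? (fun q => ((m : ℚ) * q).den == 1) with _ | q
  · exact Or.inl rfl
  have hden : ((m : ℚ) * q).den = 1 := by simpa using List.find?_some hfind
  rcases lt_or_ge ((m : ℚ) * q).num 0 with hneg | hnonneg
  · exact Or.inl (Int.toNat_eq_zero.2 hneg.le)
  refine Or.inr ⟨q, List.mem_of_find?_eq_some hfind, ?_⟩
  rw [← (Rat.den_eq_one_iff _).1 hden, ← Int.toNat_of_nonneg hnonneg]
  norm_cast

theorem fractranStep_le (F : List ℚ) (m : ℕ) :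
    (fractranStep F m : ℤ) ≤ m * (bBase F - 1) := by
  have hb := one_le_bBase F
  rcases fractranStep_eq_zero_or_exists F m with h | ⟨q, hq, h⟩
  · rw [h]; positivity
  · have hceil : ⌈q⌉ ≤ bBase F - 1 := by
      have := ceil_le_foldr_max hq
      unfold bBase; omega
    have : (fractranStep F m : ℚ) ≤ m * ((bBase F - 1 : ℤ) : ℚ) := by
      rw [h]
      exact mul_le_mul_of_nonneg_left ((Int.le_ceil q).trans (by exact_mod_cast hceil))
        (by positivity)
    exact_mod_cast this

theorem two_le_bF (hb : 2 ≤ bBase F) (i : ℕ) : 2 ≤ bF F i :=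
  hb.trans (le_self_pow₀ (by omega) i.succ_ne_zero)

theorem bF_succ (F : List ℚ) (i : ℕ) : bF F (i + 1) = bF F i * bBase F :=
  pow_succ _ _

theorem bF_lt_bF_iff (hb : 2 ≤ bBase F) {i j : ℕ} : bF F i < bF F j ↔ i < j :=
  (pow_lt_pow_iff_right₀ (by omega)).trans (by omega)

theorem exists_lt_bF (hb : 2 ≤ bBase F) (c : ℤ) : ∃ k, c < bF F k := by
  obtain ⟨k, hk⟩ := pow_unbounded_of_one_lt c (by omega : (1 : ℤ) < bBase F)
  exact ⟨k, hk.trans_le (pow_le_pow_right₀ (by omega) k.le_succ)⟩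

theorem fractranStep_add_one_lt (hb : 2 ≤ bBase F) {i m : ℕ} (h : (m : ℤ) + 1 < bF F i) :
    (fractranStep F m : ℤ) + 1 < bF F (i + 1) := by
  have := fractranStep_le F m
  rw [bF_succ]
  nlinarith

theorem digitF_nonneg (F : List ℚ) (i : ℕ) (r : ℤ) : 0 ≤ digitF F i r := by
  unfold digitF
  split_ifs <;> positivity

theorem digitF_le (hb : 2 ≤ bBase F) {i : ℕ} {r : ℤ} (h₀ : 0 ≤ r) (h₁ : r < bF F i) :
    digitF F i r ≤ bF F (i + 1) - bF F i := by
  have := two_le_bF hb i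
  rw [bF_succ]
  unfold digitF
  split_ifs
  · nlinarith
  · have := fractranStep_le F r.toNat
    rw [Int.toNat_of_nonneg h₀] at this
    nlinarith

theorem fFr_eq (hb : 2 ≤ bBase F) (i : ℕ) (m : ℤ) :
    fFr F i m = m / bF F i + digitF F i (m % bF F i) := by
  have h : m - m % bF F i = bF F i * (m / bF F i) := by rw [Int.emod_def]; ring
  have := two_le_bF hb i
  change (m - m % bF F i) / bF F i + _ = _
  rw [h, Int.mul_ediv_cancel_left _ (by omega)]
  rfl

theorem fFr_of_nonneg_of_lt (hb : 2 ≤ bBase F) {i : ℕ} {m : ℤ} (h₀ : 0 ≤ m)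
    (h₁ : m < bF F i) : fFr F i m = digitF F i m := by
  rw [fFr_eq hb, Int.emod_eq_of_lt h₀ h₁, Int.ediv_eq_zero_of_lt h₀ h₁, zero_add]

theorem fFr_bF_sub_one (hb : 2 ≤ bBase F) (i : ℕ) : fFr F i (bF F i - 1) = 1 := by
  have := two_le_bF hb i
  rw [fFr_of_nonneg_of_lt hb (by omega) (by omega), digitF, if_pos rfl]

theorem fFr_natCast_of_add_one_lt (hb : 2 ≤ bBase F) {i m : ℕ} (h : (m : ℤ) + 1 < bF F i) :
    fFr F i m = fractranStep F m := by
  rw [fFr_of_nonneg_of_lt hb (by omega) (by omega), digitF, if_neg (by omega),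
    Int.toNat_natCast]

theorem digitF_zero (hb : 2 ≤ bBase F) (i : ℕ) : digitF F i 0 = 0 := by
  have := two_le_bF hb i
  rw [digitF, if_neg (by omega)]
  simp [fractranStep]

theorem fFr_bF_mul (hb : 2 ≤ bBase F) (i : ℕ) (m : ℤ) : fFr F i (bF F i * m) = m := by
  have := two_le_bF hb i
  rw [fFr_eq hb, Int.mul_emod_right, Int.mul_ediv_cancel_left _ (by omega), digitF_zero hb,
    add_zero]

theorem fFr_neg_one (hb : 2 ≤ bBase F) (i : ℕ) : fFr F i (-1) = 0 := by
  have := two_le_bF hb i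
  obtain ⟨hq, hr⟩ := (Int.ediv_emod_unique (a := -1) (b := bF F i) (q := -1) (r := bF F i - 1)
    (by omega)).2 ⟨by ring, by omega, by omega⟩
  rw [fFr_eq hb, hq, hr, digitF, if_pos rfl, neg_add_cancel]

theorem ediv_bF_le_fFr (hb : 2 ≤ bBase F) (i : ℕ) (m : ℤ) : m / bF F i ≤ fFr F i m := by
  rw [fFr_eq hb]
  exact le_add_of_nonneg_right (digitF_nonneg F i _)

theorem fFr_le (hb : 2 ≤ bBase F) (i : ℕ) (m : ℤ) :
    fFr F i m ≤ m / bF F i + (bF F (i + 1) - bF F i) := by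
  have hpos : 0 < bF F i := by have := two_le_bF hb i; omega
  rw [fFr_eq hb]
  have := digitF_le hb (Int.emod_nonneg m hpos.ne') (Int.emod_lt_of_pos m hpos)
  omega

theorem isCanonicalSystem_fractran (hb : 2 ≤ bBase F) :
    IsCanonicalSystem (bF F) (TFr F) (fFr F) := by
  have hpos i : 0 < bF F i := by have := two_le_bF hb i; omega
  have hres {i : ℕ} {r : ℤ} (hr : r ∈ Set.Ico 0 (bF F i)) :
      (r - bF F i * digitF F i r) % bF F i = r := by
    rw [Int.sub_mul_emod_self_left, Int.emod_eq_of_lt hr.1 hr.2]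
  refine ⟨fun i => (hpos i).ne', fun i => ⟨0, ⟨le_rfl, hpos i⟩, ?_⟩, ?_, fun i m => ?_⟩
  · simp only [digitF_zero hb, mul_zero, sub_zero]
  · rintro i _ ⟨r, hr, rfl⟩ _ ⟨r', hr', rfl⟩ hdvd
    have := (Int.modEq_iff_dvd.2 hdvd).symm
    rw [Int.ModEq, hres hr, hres hr'] at this
    rw [this]
  · refine ⟨m % bF F i, ⟨Int.emod_nonneg m (hpos i).ne', Int.emod_lt_of_pos m (hpos i)⟩, ?_⟩
    rw [fFr_eq hb, Int.emod_def]
    ring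

theorem fractranStep_zero (F : List ℚ) : fractranStep F 0 = 0 := if_pos rfl

theorem FractranHalts.exists_iterate_le {m : ℕ} (h : FractranHalts F m) :
    ∃ C, ∀ s, (fractranStep F)^[s] m ≤ C := by
  obtain ⟨s₀, hs₀⟩ := h
  refine ⟨(Finset.range s₀).sup fun s => (fractranStep F)^[s] m, fun s => ?_⟩
  rcases lt_or_ge s s₀ with hs | hs
  · exact Finset.le_sup (f := fun s => (fractranStep F)^[s] m) (Finset.mem_range.2 hs)
  · rw [← Nat.sub_add_cancel hs, Function.iterate_add_apply, hs₀,
      Function.iterate_fixed (fractranStep_zero F)]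
    exact Nat.zero_le _

theorem iterate_fractranStep_add_one_lt (hb : 2 ≤ bBase F) {k m : ℕ}
    (hm : (m : ℤ) + 1 < bF F k) (s : ℕ) : ((fractranStep F)^[s] m : ℤ) + 1 < bF F (k + s) := by
  induction s with
  | zero => exact hm
  | succ s ih =>
    rw [Function.iterate_succ_apply', ← add_assoc]
    exact fractranStep_add_one_lt hb ih

theorem trajFr_add_eq_iterate (hb : 2 ≤ bBase F) {n : ℤ} {j v : ℕ}
    (hv : trajFr F n j = v) (hlt : (v : ℤ) < bF F j) (t : ℕ)
    (hne : ∀ s < t, ((fractranStep F)^[s] v : ℤ) + 1 ≠ bF F (j + s)) :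
    trajFr F n (j + t) = ((fractranStep F)^[t] v : ℕ)
      ∧ ((fractranStep F)^[t] v : ℤ) < bF F (j + t) := by
  induction t with
  | zero => exact ⟨hv, hlt⟩
  | succ t ih =>
    obtain ⟨heq, hlt'⟩ := ih fun s hs => hne s (by omega)
    have h : ((fractranStep F)^[t] v : ℤ) + 1 < bF F (j + t) :=
      lt_of_le_of_ne hlt' (hne t t.lt_succ_self)
    rw [Function.iterate_succ_apply', ← add_assoc]
    refine ⟨?_, by have := fractranStep_add_one_lt hb h; omega⟩
    rw [trajFr, heq, fFr_natCast_of_add_one_lt hb h]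

theorem exists_trajFr_eq_zero_or_eq_one (hb : 2 ≤ bBase F) {n : ℤ} {j v s₀ : ℕ}
    (hv : trajFr F n j = v) (hlt : (v : ℤ) < bF F j) (hs₀ : (fractranStep F)^[s₀] v = 0) :
    (∃ K, trajFr F n K = 0) ∨
      ∃ s, ((fractranStep F)^[s] v : ℤ) + 1 = bF F (j + s) ∧ trajFr F n (j + s + 1) = 1 := by
  classical
  by_cases hhit : ∃ s, ((fractranStep F)^[s] v : ℤ) + 1 = bF F (j + s)
  · have hs := Nat.find_spec hhit
    have htraj := (trajFr_add_eq_iterate hb hv hlt _ fun s hs => Nat.find_min hhit hs).1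
    refine Or.inr ⟨_, hs, ?_⟩
    rw [trajFr, htraj, show (((fractranStep F)^[Nat.find hhit] v : ℕ) : ℤ)
      = bF F (j + Nat.find hhit) - 1 by omega, fFr_bF_sub_one hb]
  · simp only [not_exists] at hhit
    refine Or.inl ⟨j + s₀, ?_⟩
    rw [(trajFr_add_eq_iterate hb hv hlt s₀ fun s _ => hhit s).1, hs₀, Nat.cast_zero]

theorem exists_trajFr_eq_zero_of_eq_one (hb : 2 ≤ bBase F) {n : ℤ} {L : ℕ}
    (h1 : FractranHalts F 1) (hL : ∀ s, ((fractranStep F)^[s] 1 : ℤ) + 1 < bF F L) {j : ℕ}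
    (hj : trajFr F n j = 1) : ∃ K, trajFr F n K = 0 := by
  obtain ⟨s₀, hs₀⟩ := h1
  have hlt : ((1 : ℕ) : ℤ) < bF F j := by have := two_le_bF hb j; omega
  rcases exists_trajFr_eq_zero_or_eq_one hb (by exact_mod_cast hj) hlt hs₀ with
    h | ⟨s, hhit, hone⟩
  · exact h
  · have : j + s < L := (bF_lt_bF_iff hb).1 (hhit ▸ hL s)
    exact exists_trajFr_eq_zero_of_eq_one hb ⟨s₀, hs₀⟩ hL hone
termination_by L - j

theorem trajFr_mem_Icc (hb : 2 ≤ bBase F) (n : ℤ) (i : ℕ) :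
    trajFr F n i ∈ Set.Icc (-|n|) (|n| + bF F i) := by
  induction i with
  | zero =>
    change n ∈ Set.Icc (-|n|) (|n| + bF F 0)
    exact ⟨neg_abs_le n, by linarith [le_abs_self n, two_le_bF hb 0]⟩
  | succ i ih =>
    obtain ⟨ih_lo, ih_hi⟩ := ih
    have hbi := two_le_bF hb i
    have hn := abs_nonneg n
    have hlo : -|n| ≤ trajFr F n i / bF F i :=
      (Int.le_ediv_iff_mul_le (by omega)).2 (by nlinarith)
    have hhi : trajFr F n i / bF F i < |n| + 2 :=
      (Int.ediv_lt_iff_lt_mul (by omega)).2 (by nlinarith)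
    have := ediv_bF_le_fFr hb i (trajFr F n i)
    have := fFr_le hb i (trajFr F n i)
    exact ⟨by rw [trajFr]; omega, by rw [trajFr]; omega⟩

theorem exists_trajFr_eq_zero_or_mem_Ico (hb : 2 ≤ bBase F) (n : ℤ) :
    (∃ K, trajFr F n K = 0) ∨ ∃ j, trajFr F n j ∈ Set.Ico 0 (bF F j) := by
  obtain ⟨k, hk⟩ := exists_lt_bF hb (|n| + 1)
  obtain ⟨hlo, hhi⟩ := trajFr_mem_Icc hb n k
  have hbk := two_le_bF hb k
  have hdiv_lo : -1 ≤ trajFr F n k / bF F k :=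
    (Int.le_ediv_iff_mul_le (by omega)).2 (by omega)
  have hdiv_hi : trajFr F n k / bF F k < 2 :=
    (Int.ediv_lt_iff_lt_mul (by omega)).2 (by omega)
  have := ediv_bF_le_fFr hb k (trajFr F n k)
  have := fFr_le hb k (trajFr F n k)
  have hstep : trajFr F n (k + 1) = fFr F k (trajFr F n k) := rfl
  rcases eq_or_lt_of_le (by omega : -1 ≤ trajFr F n (k + 1)) with h | h
  · exact Or.inl ⟨k + 2, by rw [trajFr, ← h, fFr_neg_one hb]⟩
  · exact Or.inr ⟨k + 1, by omega, by omega⟩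

theorem exists_trajFr_eq_zero (hb : 2 ≤ bBase F) (hH : ∀ m, FractranHalts F m) (n : ℤ) :
    ∃ K, trajFr F n K = 0 := by
  obtain ⟨C, hC⟩ := (hH 1).exists_iterate_le
  obtain ⟨L, hL⟩ := exists_lt_bF hb (C + 1)
  rcases exists_trajFr_eq_zero_or_mem_Ico hb n with h | ⟨j, h₀, hlt⟩
  · exact h
  obtain ⟨v, hv⟩ := Int.eq_ofNat_of_zero_le h₀
  obtain ⟨s₀, hs₀⟩ := hH v
  rcases exists_trajFr_eq_zero_or_eq_one hb hv (hv ▸ hlt) hs₀ with h | ⟨s, -, hone⟩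
  · exact h
  · exact exists_trajFr_eq_zero_of_eq_one (L := L) hb (hH 1) (fun s => by have := hC s; omega) hone

theorem trajFr_prodBases_mul (hb : 2 ≤ bBase F) (n : ℤ) (k : ℕ) :
    trajFr F (prodBases (bF F) k * n) k = n := by
  induction k generalizing n with
  | zero => simp [prodBases, trajFr]
  | succ k ih => rw [prodBases_succ, mul_assoc, trajFr, ih, fFr_bF_mul hb]

theorem fractranHalts_of_forall_exists_trajFr_eq_zero (hb : 2 ≤ bBase F)
    (h : ∀ n : ℤ, ∃ K, trajFr F n K = 0) (m : ℕ) : FractranHalts F m := by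
  obtain ⟨k, hk⟩ := exists_lt_bF hb (m + 1)
  obtain ⟨K, hK⟩ := h (prodBases (bF F) k * m)
  obtain ⟨htraj, -⟩ := trajFr_add_eq_iterate hb (trajFr_prodBases_mul hb m k) (by omega) K
    fun s _ => (iterate_fractranStep_add_one_lt hb hk s).ne
  have := (isCanonicalSystem_fractran hb).eq_zero_of_le (fun _ => rfl) hK (Nat.le_add_left K k)
  rw [htraj] at this
  exact ⟨K, by exact_mod_cast this⟩

end Fractran

/-- A Fractran program `F` halts for all inputs if and only if the Fractran-type
canonical collection `𝒜_F` is complete (an additive system for `ℤ`). -/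
theorem fractran_halts_iff_AF_complete
    (F : List ℚ) (hne : F ≠ []) (hpos : ∀ q ∈ F, 0 < q) :
    (∀ n : ℕ, FractranHalts F n) ↔
      (∀ n : ℤ, ∃! a : ℕ → ℤ, IsRepr (memberSet (bF F) (TFr F)) n a) := by
  have hb := two_le_bBase hne hpos
  rw [(isCanonicalSystem_fractran hb).complete_iff (trajFr F) (fun _ => rfl) fun _ _ => rfl]
  exact ⟨exists_trajFr_eq_zero hb, fractranHalts_of_forall_exists_trajFr_eq_zero hb⟩
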